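/- arXiv:2502.12037 — 3 statements merged into one kernel-verified Lean document; each statement's English description precedes it below -/
import Mathlib

section
/- Let a₊, a₋ ∈ (0,2)\{1}, let C₊, C₋, λ₊, λ₋ > 0 and T > 0, and let ℓ be the GTS Lévy density with parameters (a₊, a₋, C₊, C₋, λ₊, λ₋). Define the score functions s₊(x) = −x for x > 0 and s₊(x) = 0 for x ≤ 0, and s₋(x) = −|x| for x < 0 and s₋(x) = 0 for x ≥ 0 (these are the partial derivatives of log ℓ(x) with respect to λ₊ and λ₋, respectively). Then the Fisher information matrix g_{ij} = T·∫_ℝ s_i(x)·s_j(x)·ℓ(x) dx (indices i, j ∈ {+, −}) is diagonal: g_{+−} = g_{−+} = 0, g_{++} = T·C₊·Γ(2−a₊)/λ₊^{2−a₊}, and g_{−−} = T·C₋·Γ(2−a₋)/λ₋^{2−a₋}; in particular all four integrands are integrable on ℝ. -/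
open MeasureTheory Real Set

/-- The GTS (generalized tempered stable) Lévy density with parameters
`(a₊, a₋, C₊, C₋, λ₊, λ₋)`. -/
noncomputable def gtsDensity (ap am Cp Cm tp tm : ℝ) (x : ℝ) : ℝ :=
  if 0 < x then Cp * exp (-(tp * x)) * x ^ (-ap - 1)
  else if x < 0 then Cm * exp (-(tm * |x|)) * |x| ^ (-am - 1)
  else 0

/-- Score function `∂ log ℓ / ∂λ₊`: equals `−x` for `x > 0` and `0` otherwise. -/
noncomputable def gtsScorePlus (x : ℝ) : ℝ := if 0 < x then -x else 0

/-- Score function `∂ log ℓ / ∂λ₋`: equals `−|x|` for `x < 0` and `0` otherwise. -/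
noncomputable def gtsScoreMinus (x : ℝ) : ℝ := if x < 0 then -|x| else 0

/-! The two scores have disjoint supports, so the off-diagonal entries vanish identically. On each
half-line the squared score times the density is `C x ^ (1 - a) e^{-λx}`, whose integral is the
Gamma integral `C Γ(2 - a) / λ ^ (2 - a)`, convergent because `a < 2`; the negative half-line is
reduced to the positive one by the reflection `x ↦ -x`. -/

lemma integrable_indicator_Ioi_rpow_mul_exp_neg_mul {s l : ℝ} (hs : -1 < s) (hl : 0 < l) :
    Integrable ((Ioi 0).indicator fun x => x ^ s * exp (-(l * x))) := by
  rw [integrable_indicator_iff measurableSet_Ioi]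
  simpa only [rpow_one, neg_mul] using integrableOn_rpow_mul_exp_neg_mul_rpow hs one_pos hl

lemma integral_indicator_Ioi_rpow_mul_exp_neg_mul {s l : ℝ} (hs : -1 < s) (hl : 0 < l) :
    ∫ x, (Ioi 0).indicator (fun x => x ^ s * exp (-(l * x))) x
      = Gamma (s + 1) / l ^ (s + 1) := by
  rw [integral_indicator measurableSet_Ioi]
  have h := integral_rpow_mul_exp_neg_mul_Ioi (a := s + 1) (by linarith) hl
  rw [add_sub_cancel_right] at h
  rw [h, one_div, inv_rpow hl.le, inv_mul_eq_div]

lemma mul_self_mul_rpow_neg_sub_one {x : ℝ} (hx : 0 < x) (a : ℝ) :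
    x * x * x ^ (-a - 1) = x ^ (1 - a) := by
  rw [show 1 - a = -a - 1 + 1 + 1 by ring, rpow_add_one hx.ne', rpow_add_one hx.ne']
  ring

@[simp]
lemma gtsScorePlus_mul_gtsScoreMinus (x : ℝ) : gtsScorePlus x * gtsScoreMinus x = 0 := by
  by_cases hx : 0 < x
  · simp [gtsScoreMinus, not_lt.mpr hx.le]
  · simp [gtsScorePlus, hx]

@[simp]
lemma gtsScoreMinus_mul_gtsScorePlus (x : ℝ) : gtsScoreMinus x * gtsScorePlus x = 0 := by
  rw [mul_comm, gtsScorePlus_mul_gtsScoreMinus]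

@[simp]
lemma gtsScorePlus_mul_self_mul_gtsDensity (ap am Cp Cm lp lm x : ℝ) :
    gtsScorePlus x * gtsScorePlus x * gtsDensity ap am Cp Cm lp lm x
      = Cp * (Ioi 0).indicator (fun y => y ^ (1 - ap) * exp (-(lp * y))) x := by
  by_cases hx : 0 < x
  · simp only [gtsScorePlus, gtsDensity, if_pos hx, indicator_of_mem (mem_Ioi.mpr hx),
      ← mul_self_mul_rpow_neg_sub_one hx ap]
    ring
  · simp [gtsScorePlus, hx]

@[simp]
lemma gtsScoreMinus_mul_self_mul_gtsDensity (ap am Cp Cm lp lm x : ℝ) :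
    gtsScoreMinus x * gtsScoreMinus x * gtsDensity ap am Cp Cm lp lm x
      = Cm * (Ioi 0).indicator (fun y => y ^ (1 - am) * exp (-(lm * y))) (-x) := by
  by_cases hx : x < 0
  · have hnx : 0 < -x := neg_pos.mpr hx
    simp only [gtsScoreMinus, gtsDensity, if_pos hx, if_neg (not_lt.mpr hx.le), abs_of_neg hx,
      indicator_of_mem (mem_Ioi.mpr hnx), ← mul_self_mul_rpow_neg_sub_one hnx am]
    ring
  · simp [gtsScoreMinus, hx]

theorem gts_fisher_information_general (ap am Cp Cm lp lm T : ℝ)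
    (hap : ap ∈ Ioo (0:ℝ) 2)
    (ham : am ∈ Ioo (0:ℝ) 2)
    (hlp : 0 < lp) (hlm : 0 < lm) :
    Integrable (fun x : ℝ =>
      gtsScorePlus x * gtsScorePlus x * gtsDensity ap am Cp Cm lp lm x) ∧
    Integrable (fun x : ℝ =>
      gtsScorePlus x * gtsScoreMinus x * gtsDensity ap am Cp Cm lp lm x) ∧
    Integrable (fun x : ℝ =>
      gtsScoreMinus x * gtsScorePlus x * gtsDensity ap am Cp Cm lp lm x) ∧
    Integrable (fun x : ℝ =>
      gtsScoreMinus x * gtsScoreMinus x * gtsDensity ap am Cp Cm lp lm x) ∧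
    T * ∫ x : ℝ, gtsScorePlus x * gtsScoreMinus x * gtsDensity ap am Cp Cm lp lm x = 0 ∧
    T * ∫ x : ℝ, gtsScoreMinus x * gtsScorePlus x * gtsDensity ap am Cp Cm lp lm x = 0 ∧
    T * ∫ x : ℝ, gtsScorePlus x * gtsScorePlus x * gtsDensity ap am Cp Cm lp lm x
      = T * Cp * Gamma (2 - ap) / lp ^ (2 - ap) ∧
    T * ∫ x : ℝ, gtsScoreMinus x * gtsScoreMinus x * gtsDensity ap am Cp Cm lp lm x
      = T * Cm * Gamma (2 - am) / lm ^ (2 - am) := by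
  have hsp : -1 < 1 - ap := by linarith [hap.2]
  have hsm : -1 < 1 - am := by linarith [ham.2]
  have hplus := integrable_indicator_Ioi_rpow_mul_exp_neg_mul hsp hlp
  have hminus := integrable_indicator_Ioi_rpow_mul_exp_neg_mul hsm hlm
  simp only [gtsScorePlus_mul_self_mul_gtsDensity, gtsScoreMinus_mul_self_mul_gtsDensity,
    gtsScorePlus_mul_gtsScoreMinus, gtsScoreMinus_mul_gtsScorePlus, zero_mul]
  refine ⟨hplus.const_mul Cp, integrable_zero _ _ _, integrable_zero _ _ _,
    hminus.comp_neg.const_mul Cm, by simp, by simp, ?_, ?_⟩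
  · rw [integral_const_mul, integral_indicator_Ioi_rpow_mul_exp_neg_mul hsp hlp,
      show 1 - ap + 1 = 2 - ap by ring]
    ring
  · rw [integral_const_mul, integral_neg_eq_self (fun x => (Ioi 0).indicator _ x),
      integral_indicator_Ioi_rpow_mul_exp_neg_mul hsm hlm, show 1 - am + 1 = 2 - am by ring]
    ring

/-- The Fisher information matrix of GTS processes in the coordinates `(λ₊, λ₋)`
is diagonal, with the stated diagonal entries. -/
theorem gts_fisher_information (ap am Cp Cm lp lm T : ℝ)
    (hap : ap ∈ Ioo (0:ℝ) 2) (hap1 : ap ≠ 1)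
    (ham : am ∈ Ioo (0:ℝ) 2) (ham1 : am ≠ 1)
    (hCp : 0 < Cp) (hCm : 0 < Cm) (hlp : 0 < lp) (hlm : 0 < lm) (hT : 0 < T) :
    Integrable (fun x : ℝ =>
      gtsScorePlus x * gtsScorePlus x * gtsDensity ap am Cp Cm lp lm x) ∧
    Integrable (fun x : ℝ =>
      gtsScorePlus x * gtsScoreMinus x * gtsDensity ap am Cp Cm lp lm x) ∧
    Integrable (fun x : ℝ =>
      gtsScoreMinus x * gtsScorePlus x * gtsDensity ap am Cp Cm lp lm x) ∧
    Integrable (fun x : ℝ =>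
      gtsScoreMinus x * gtsScoreMinus x * gtsDensity ap am Cp Cm lp lm x) ∧
    T * ∫ x : ℝ, gtsScorePlus x * gtsScoreMinus x * gtsDensity ap am Cp Cm lp lm x = 0 ∧
    T * ∫ x : ℝ, gtsScoreMinus x * gtsScorePlus x * gtsDensity ap am Cp Cm lp lm x = 0 ∧
    T * ∫ x : ℝ, gtsScorePlus x * gtsScorePlus x * gtsDensity ap am Cp Cm lp lm x
      = T * Cp * Gamma (2 - ap) / lp ^ (2 - ap) ∧
    T * ∫ x : ℝ, gtsScoreMinus x * gtsScoreMinus x * gtsDensity ap am Cp Cm lp lm x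
      = T * Cm * Gamma (2 - am) / lm ^ (2 - am) :=
  gts_fisher_information_general ap am Cp Cm lp lm T hap ham hlp hlm
end

section
/- Let a₊, a₋ ∈ (0,2)\{1}, let C₊, C₋, λ₊, λ₋ > 0, T > 0 and α ∈ ℝ, and let ℓ be the GTS Lévy density with parameters (a₊, a₋, C₊, C₋, λ₊, λ₋). With score functions s₊(x) = −x·1_{x>0} and s₋(x) = −|x|·1_{x<0} (the first partial derivatives of log ℓ with respect to λ₊ and λ₋; all second partial derivatives of log ℓ with respect to (λ₊, λ₋) vanish), the α-connection components Γ^{(α)}_{ij,k} = T·∫_ℝ ((1−α)/2)·s_i(x)·s_j(x)·s_k(x)·ℓ(x) dx satisfy: Γ^{(α)}_{++,+} = −((1−α)/2)·T·C₊·Γ(3−a₊)/λ₊^{3−a₊}, Γ^{(α)}_{−−,−} = −((1−α)/2)·T·C₋·Γ(3−a₋)/λ₋^{3−a₋}, and all components with indices not all equal vanish. Equivalently, T·∫₀^∞ ((1−α)/2)·(−x)³·C₊·e^{−λ₊x}·x^{−a₊−1} dx = −((1−α)/2)·T·C₊·Γ(3−a₊)·λ₊^{a₊−3}. -/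
open MeasureTheory Real Set

/-- The score functions of the GTS Lévy density in the coordinates `(λ₊, λ₋)`,
indexed by `true` for `λ₊` and `false` for `λ₋`:
`s₊(x) = −x·1_{x>0}` and `s₋(x) = −|x|·1_{x<0}`. -/
noncomputable def gtsScore (i : Bool) (x : ℝ) : ℝ :=
  if i then (if 0 < x then -x else 0) else (if x < 0 then -|x| else 0)

lemma gts_key_int {a r : ℝ} (ha3 : 0 < 3 - a) (hr : 0 < r) (c C : ℝ) :
    ∫ x in Ioi (0:ℝ), c * (-x) ^ 3 * (C * exp (-(r * x)) * x ^ (-a - 1))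
      = -(c * C) * (Gamma (3 - a) * r ^ (a - 3)) := by
  have h := integral_rpow_mul_exp_neg_mul_Ioi (a := 3 - a) (r := r) ha3 hr
  have hcongr : ∫ x in Ioi (0:ℝ), c * (-x) ^ 3 * (C * exp (-(r * x)) * x ^ (-a - 1))
      = ∫ x in Ioi (0:ℝ), (-(c * C)) * (x ^ (3 - a - 1) * exp (-(r * x))) := by
    refine setIntegral_congr_fun measurableSet_Ioi fun x hx => ?_
    have hx : (0:ℝ) < x := hx
    have h3 : x ^ (3 - a - 1) = x ^ (3:ℕ) * x ^ (-a - 1) := by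
      rw [← rpow_natCast x 3, ← rpow_add hx, show ((3:ℕ):ℝ) + (-a - 1) = 3 - a - 1 by push_cast; ring]
    rw [h3]; ring
  rw [hcongr, integral_const_mul, h, one_div, inv_rpow hr.le,
    ← rpow_neg hr.le, show -(3 - a) = a - 3 by ring]
  ring

/-- The α-connection of the GTS information geometry in the coordinates
`(λ₊, λ₋)`: only the components with all indices equal are nonzero, and they
take the stated values. -/
theorem gts_alpha_connection (ap am Cp Cm lp lm T α : ℝ)
    (hap : ap ∈ Ioo (0:ℝ) 2) (hap1 : ap ≠ 1)
    (ham : am ∈ Ioo (0:ℝ) 2) (ham1 : am ≠ 1)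
    (hCp : 0 < Cp) (hCm : 0 < Cm) (hlp : 0 < lp) (hlm : 0 < lm) (hT : 0 < T) :
    (T * ∫ x : ℝ, ((1 - α) / 2) * gtsScore true x * gtsScore true x * gtsScore true x *
          gtsDensity ap am Cp Cm lp lm x
        = -((1 - α) / 2) * T * Cp * Gamma (3 - ap) / lp ^ (3 - ap)) ∧
    (T * ∫ x : ℝ, ((1 - α) / 2) * gtsScore false x * gtsScore false x * gtsScore false x *
          gtsDensity ap am Cp Cm lp lm x
        = -((1 - α) / 2) * T * Cm * Gamma (3 - am) / lm ^ (3 - am)) ∧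
    (∀ i j k : Bool, ¬(i = j ∧ j = k) →
      T * ∫ x : ℝ, ((1 - α) / 2) * gtsScore i x * gtsScore j x * gtsScore k x *
          gtsDensity ap am Cp Cm lp lm x = 0) ∧
    (T * ∫ x in Ioi (0:ℝ), ((1 - α) / 2) * (-x) ^ 3 * (Cp * exp (-(lp * x)) * x ^ (-ap - 1))
        = -((1 - α) / 2) * T * Cp * Gamma (3 - ap) * lp ^ (ap - 3)) := by
  set c : ℝ := (1 - α) / 2 with hc
  have hap3 : 0 < 3 - ap := by linarith [hap.2]
  have ham3 : 0 < 3 - am := by linarith [ham.2]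
  have hpowp : lp ^ (ap - 3) = (lp ^ (3 - ap))⁻¹ := by
    rw [show ap - 3 = -(3 - ap) by ring, rpow_neg hlp.le]
  have hpowm : lm ^ (am - 3) = (lm ^ (3 - am))⁻¹ := by
    rw [show am - 3 = -(3 - am) by ring, rpow_neg hlm.le]
  refine ⟨?_, ?_, ?_, ?_⟩
  · have hind : (fun x : ℝ => c * gtsScore true x * gtsScore true x * gtsScore true x *
        gtsDensity ap am Cp Cm lp lm x)
        = (Ioi (0:ℝ)).indicator
            (fun x => c * (-x) ^ 3 * (Cp * exp (-(lp * x)) * x ^ (-ap - 1))) := by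
      funext x
      by_cases h : 0 < x
      · simp only [gtsScore, gtsDensity, if_pos h, if_true, indicator_of_mem (mem_Ioi.2 h)]
        ring
      · rw [indicator_of_notMem (by simpa using le_of_not_gt h)]
        simp [gtsScore, h]
    rw [hind, integral_indicator measurableSet_Ioi, gts_key_int hap3 hlp, hpowp]
    ring
  · have hcn : (∫ x : ℝ, c * gtsScore false x * gtsScore false x * gtsScore false x *
        gtsDensity ap am Cp Cm lp lm x)
        = ∫ x : ℝ, c * gtsScore false (-x) * gtsScore false (-x) * gtsScore false (-x) *
            gtsDensity ap am Cp Cm lp lm (-x) := by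
      exact (integral_neg_eq_self _ volume).symm
    rw [hcn]
    have hind : (fun x : ℝ => c * gtsScore false (-x) * gtsScore false (-x) *
        gtsScore false (-x) * gtsDensity ap am Cp Cm lp lm (-x))
        = (Ioi (0:ℝ)).indicator
            (fun x => c * (-x) ^ 3 * (Cm * exp (-(lm * x)) * x ^ (-am - 1))) := by
      funext x
      by_cases h : 0 < x
      · have hx1 : ¬ (0 < -x) := by linarith
        have hx2 : -x < 0 := by linarith
        rw [indicator_of_mem (mem_Ioi.2 h)]
        simp only [gtsScore, gtsDensity, if_pos hx2, if_neg hx1, Bool.false_eq_true,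
          if_false, abs_neg, abs_of_pos h]
        ring
      · have hx2 : ¬ (-x < 0) := by push_neg at h ⊢; linarith
        rw [indicator_of_notMem (by simpa using le_of_not_gt h)]
        simp [gtsScore, hx2]
    rw [hind, integral_indicator measurableSet_Ioi, gts_key_int ham3 hlm, hpowm]
    ring
  · intro i j k hne
    have hzx : ∀ x : ℝ, gtsScore true x = 0 ∨ gtsScore false x = 0 := by
      intro x
      by_cases h : 0 < x
      · right; simp [gtsScore, asymm h]
      · left; simp [gtsScore, h]
    have hzero : ∀ x : ℝ, c * gtsScore i x * gtsScore j x * gtsScore k x *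
        gtsDensity ap am Cp Cm lp lm x = 0 := by
      intro x
      rcases hzx x with h | h <;> rcases i <;> rcases j <;> rcases k <;> simp_all
    simp only [hzero, integral_zero, mul_zero]
  · rw [gts_key_int hap3 hlp]
    ring
end

section
/- Let a ∈ (0,2), let C > 0, λ > 0, T > 0 and α ∈ ℝ. Then the function x ↦ ((1−α)/2)·(−x²/2)³·C·exp(−λx²/2)·x^(−a−1) is integrable on (0,∞) and T·∫₀^∞ ((1−α)/2)·(−x²/2)³·C·exp(−λx²/2)·x^(−a−1) dx = −((1−α)/2)·2^{−1−a/2}·T·C·Γ(3−a/2)/λ^{3−a/2}. -/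
/-!
Since `(-x²/2)³ = -x⁶/8`, the integrand is a constant multiple of the Gaussian moment
`x ^ (5 - a) * exp (-l x² / 2)`, which the substitution `u = l x² / 2` turns into
`2 ^ ((4 - a) / 2) * Γ(3 - a/2) / l ^ (3 - a/2)`.
-/

open MeasureTheory Real Set

section GaussianMoments

variable {l s : ℝ}

theorem integrableOn_rpow_mul_exp_neg_mul_sq_div_two (hl : 0 < l) (hs : -1 < s) :
    IntegrableOn (fun x : ℝ => x ^ s * exp (-(l * x ^ 2 / 2))) (Ioi 0) := by
  convert integrableOn_rpow_mul_exp_neg_mul_sq (half_pos hl) hs using 4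
  ring

theorem integral_rpow_mul_exp_neg_mul_sq_div_two (hl : 0 < l) (hs : -1 < s) :
    ∫ x in Ioi (0:ℝ), x ^ s * exp (-(l * x ^ 2 / 2)) =
      2 ^ ((s - 1) / 2) * Gamma ((s + 1) / 2) / l ^ ((s + 1) / 2) := by
  have hexp (x : ℝ) : -(l * x ^ 2 / 2) = -(l / 2) * x ^ (2:ℝ) := by rw [rpow_two]; ring
  simp_rw [hexp]
  rw [integral_rpow_mul_exp_neg_mul_rpow two_pos hs (half_pos hl), neg_div, rpow_neg (by positivity),
    div_rpow hl.le zero_le_two, show (s - 1) / 2 = (s + 1) / 2 - 1 by ring,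
    rpow_sub_one two_ne_zero]
  field_simp

end GaussianMoments

theorem rdts_integrand_eq {a C l α x : ℝ} (hx : 0 < x) :
    ((1 - α) / 2) * (-(x ^ 2) / 2) ^ 3 * C * exp (-(l * x ^ 2 / 2)) * x ^ (-a - 1) =
      -((1 - α) / 2) * C / 8 * (x ^ (5 - a) * exp (-(l * x ^ 2 / 2))) := by
  have hpow : x ^ (5 - a) = x ^ 6 * x ^ (-a - 1) := by
    rw [← rpow_natCast, ← rpow_add hx]
    norm_num
    ring_nf
  rw [hpow]
  ring

theorem rdts_alpha_connection_component_general (a C l T α : ℝ)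
    (ha₂ : a < 2) (hl : 0 < l) :
    IntegrableOn
      (fun x : ℝ => ((1 - α) / 2) * (-(x ^ 2) / 2) ^ 3 * C * exp (-(l * x ^ 2 / 2))
        * x ^ (-a - 1)) (Ioi 0) ∧
    T * ∫ x in Ioi (0:ℝ),
        ((1 - α) / 2) * (-(x ^ 2) / 2) ^ 3 * C * exp (-(l * x ^ 2 / 2)) * x ^ (-a - 1)
      = -((1 - α) / 2) * (2:ℝ) ^ (-1 - a / 2) * T * C * Gamma (3 - a / 2) / l ^ (3 - a / 2) := by
  have hs : (-1:ℝ) < 5 - a := by linarith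
  have hcongr : EqOn
      (fun x : ℝ => ((1 - α) / 2) * (-(x ^ 2) / 2) ^ 3 * C * exp (-(l * x ^ 2 / 2))
        * x ^ (-a - 1))
      (fun x : ℝ => -((1 - α) / 2) * C / 8 * (x ^ (5 - a) * exp (-(l * x ^ 2 / 2)))) (Ioi 0) :=
    fun x hx => rdts_integrand_eq hx
  refine ⟨IntegrableOn.congr_fun ((integrableOn_rpow_mul_exp_neg_mul_sq_div_two hl hs).const_mul _)
    hcongr.symm measurableSet_Ioi, ?_⟩
  rw [setIntegral_congr_fun measurableSet_Ioi hcongr, integral_const_mul,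
    integral_rpow_mul_exp_neg_mul_sq_div_two hl hs,
    show (5 - a - 1) / 2 = (-1 - a / 2) + 3 by ring, show (5 - a + 1) / 2 = 3 - a / 2 by ring,
    rpow_add two_pos]
  norm_num
  ring

/-- The nonvanishing α-connection component of the RDTS information geometry. -/
theorem rdts_alpha_connection_component (a C l T α : ℝ)
    (ha₀ : 0 < a) (ha₂ : a < 2) (hC : 0 < C) (hl : 0 < l) (hT : 0 < T) :
    IntegrableOn
      (fun x : ℝ => ((1 - α) / 2) * (-(x ^ 2) / 2) ^ 3 * C * exp (-(l * x ^ 2 / 2))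
        * x ^ (-a - 1)) (Ioi 0) ∧
    T * ∫ x in Ioi (0:ℝ),
        ((1 - α) / 2) * (-(x ^ 2) / 2) ^ 3 * C * exp (-(l * x ^ 2 / 2)) * x ^ (-a - 1)
      = -((1 - α) / 2) * (2:ℝ) ^ (-1 - a / 2) * T * C * Gamma (3 - a / 2) / l ^ (3 - a / 2) :=
  rdts_alpha_connection_component_general a C l T α ha₂ hl
end
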